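/- The limit as x → 0⁺ of ∫₀^∞ x·t^{x-1}/(e^t + 1) dt equals 1/2; equivalently, lim_{x→0⁺} ∫₀^∞ t^x·e^t/(e^t + 1)² dt = ∫₀^∞ e^t/(e^t + 1)² dt = 1/2. -/

import Mathlib

/-!
Integrating by parts against `t ↦ t ^ x` turns `∫₀^∞ x t^(x-1) / (eᵗ + 1) dt` into
`∫₀^∞ t^x eᵗ / (eᵗ + 1)² dt`; the boundary term `t^x / (eᵗ + 1)` vanishes at `0` because `x > 0`
and at `∞` because `(eᵗ + 1)⁻¹ ≤ e⁻ᵗ`. As `x → 0⁺`, dominated convergence with the bound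
`t^x ≤ 1 + t` (valid for `0 ≤ x ≤ 1`) gives the limit `∫₀^∞ eᵗ / (eᵗ + 1)² dt`, which equals
`[-(eᵗ + 1)⁻¹]₀^∞ = 1/2`.
-/

open Real MeasureTheory Filter Set Topology

lemma inv_exp_add_one_le_exp_neg (t : ℝ) : (exp t + 1)⁻¹ ≤ exp (-t) := by
  rw [exp_neg]
  exact inv_anti₀ (exp_pos t) (by linarith)

lemma exp_div_exp_add_one_sq_le_exp_neg (t : ℝ) : exp t / (exp t + 1) ^ 2 ≤ exp (-t) :=
  calc exp t / (exp t + 1) ^ 2 ≤ exp t / exp t ^ 2 := by gcongr; linarith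
    _ = exp (-t) := by rw [exp_neg]; field_simp

lemma integrableOn_rpow_mul_exp_neg {s : ℝ} (hs : -1 < s) :
    IntegrableOn (fun t : ℝ => t ^ s * exp (-t)) (Ioi 0) := by
  simpa using integrableOn_rpow_mul_exp_neg_rpow hs one_pos

lemma integrableOn_Ioi_of_norm_le_rpow_mul_exp_neg {f : ℝ → ℝ} {s : ℝ} (C : ℝ) (hs : -1 < s)
    (hf : ContinuousOn f (Ioi 0)) (hle : ∀ t > 0, ‖f t‖ ≤ C * (t ^ s * exp (-t))) :
    IntegrableOn f (Ioi 0) :=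
  ((integrableOn_rpow_mul_exp_neg hs).const_mul C).mono'
    (hf.aestronglyMeasurable measurableSet_Ioi)
    ((ae_restrict_iff' measurableSet_Ioi).2 (ae_of_all _ hle))

lemma continuousOn_rpow_const_Ioi (s : ℝ) : ContinuousOn (fun t : ℝ => t ^ s) (Ioi 0) :=
  continuousOn_id.rpow_const fun _ ht => Or.inl (ne_of_gt ht)

lemma integrableOn_mul_rpow_sub_one_div_exp_add_one {x : ℝ} (hx : 0 < x) :
    IntegrableOn (fun t : ℝ => x * t ^ (x - 1) / (exp t + 1)) (Ioi 0) := by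
  refine integrableOn_Ioi_of_norm_le_rpow_mul_exp_neg (s := x - 1) x (by linarith) ?_
    fun t ht => ?_
  · exact (continuousOn_const.mul (continuousOn_rpow_const_Ioi _)).div (by fun_prop)
      fun t _ => by positivity
  · rw [norm_of_nonneg (by positivity), mul_div_assoc, div_eq_mul_inv]
    gcongr
    exact inv_exp_add_one_le_exp_neg t

lemma integrableOn_rpow_mul_exp_div_exp_add_one_sq {s : ℝ} (hs : -1 < s) :
    IntegrableOn (fun t : ℝ => t ^ s * exp t / (exp t + 1) ^ 2) (Ioi 0) := by
  refine integrableOn_Ioi_of_norm_le_rpow_mul_exp_neg 1 hs ?_ fun t ht => ?_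
  · exact ((continuousOn_rpow_const_Ioi _).mul (by fun_prop)).div (by fun_prop)
      fun t _ => by positivity
  · rw [norm_of_nonneg (by positivity), one_mul, mul_div_assoc]
    gcongr
    exact exp_div_exp_add_one_sq_le_exp_neg t

lemma integral_exp_div_exp_add_one_sq_Ioi_zero :
    ∫ t in Ioi (0 : ℝ), exp t / (exp t + 1) ^ 2 = 1 / 2 := by
  have hderiv (t : ℝ) : HasDerivAt (fun t => -(exp t + 1)⁻¹) (exp t / (exp t + 1) ^ 2) t := by
    refine (((hasDerivAt_exp t).add_const 1).inv (by positivity)).neg.congr_deriv ?_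
    ring
  have hlim : Tendsto (fun t => -(exp t + 1)⁻¹) atTop (𝓝 0) := by
    simpa using (tendsto_exp_atTop.atTop_add tendsto_const_nhds).inv_tendsto_atTop.neg
  rw [integral_Ioi_of_hasDerivAt_of_tendsto' (fun t _ => hderiv t)
    (by simpa using integrableOn_rpow_mul_exp_div_exp_add_one_sq (s := 0) (by norm_num)) hlim]
  norm_num

lemma integral_mul_rpow_sub_one_div_exp_add_one {x : ℝ} (hx : 0 < x) :
    ∫ t in Ioi (0 : ℝ), x * t ^ (x - 1) / (exp t + 1)
      = ∫ t in Ioi (0 : ℝ), t ^ x * exp t / (exp t + 1) ^ 2 := by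
  have hA := integrableOn_mul_rpow_sub_one_div_exp_add_one hx
  have hB := integrableOn_rpow_mul_exp_div_exp_add_one_sq (s := x) (by linarith)
  have hcont : ContinuousWithinAt (fun t : ℝ => t ^ x * (exp t + 1)⁻¹) (Ici 0) 0 :=
    ((continuousAt_rpow_const 0 x (Or.inr hx.le)).mul
      ((continuous_exp.add continuous_const).continuousAt.inv₀ (by norm_num))).continuousWithinAt
  have hderiv : ∀ t ∈ Ioi (0 : ℝ), HasDerivAt (fun t : ℝ => t ^ x * (exp t + 1)⁻¹)
      (x * t ^ (x - 1) / (exp t + 1) - t ^ x * exp t / (exp t + 1) ^ 2) t := fun t ht => by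
    refine ((hasDerivAt_rpow_const (p := x) (Or.inl (ne_of_gt ht))).mul
      (((hasDerivAt_exp t).add_const 1).inv (by positivity))).congr_deriv ?_
    simp only [Pi.inv_apply]
    ring
  have hlim : Tendsto (fun t : ℝ => t ^ x * (exp t + 1)⁻¹) atTop (𝓝 0) := by
    refine squeeze_zero' ?_ ?_
      (tendsto_rpow_mul_exp_neg_mul_atTop_nhds_zero x 1 one_pos)
    · filter_upwards [eventually_gt_atTop 0] with t ht
      positivity
    filter_upwards [eventually_gt_atTop 0] with t ht
    simpa using mul_le_mul_of_nonneg_left (inv_exp_add_one_le_exp_neg t) (rpow_nonneg ht.le x)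
  have := integral_Ioi_of_hasDerivAt_of_tendsto hcont hderiv (hA.sub hB) hlim
  rwa [integral_sub hA hB, zero_rpow hx.ne', zero_mul, sub_zero, sub_eq_zero] at this

lemma rpow_le_one_add {x t : ℝ} (ht : 0 ≤ t) (hx : x ∈ Icc 0 1) : t ^ x ≤ 1 + t := by
  rcases le_or_gt t 1 with h | h
  · linarith [rpow_le_one ht h hx.1]
  · have := rpow_le_rpow_of_exponent_le h.le hx.2
    rw [rpow_one] at this
    linarith

lemma tendsto_integral_rpow_mul_nhdsGT_zero {g : ℝ → ℝ} (hg : IntegrableOn g (Ioi 0))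
    (htg : IntegrableOn (fun t => t * g t) (Ioi 0)) :
    Tendsto (fun x : ℝ => ∫ t in Ioi 0, t ^ x * g t) (𝓝[>] 0) (𝓝 (∫ t in Ioi 0, g t)) := by
  refine tendsto_integral_filter_of_dominated_convergence (fun t => ‖g t‖ + ‖t * g t‖)
    (Eventually.of_forall fun x => ?_) ?_ (hg.norm.add htg.norm) ?_
  · exact (measurable_id.pow_const x).aestronglyMeasurable.mul hg.aestronglyMeasurable
  · filter_upwards [Ioo_mem_nhdsGT (zero_lt_one' ℝ)] with x hx
    refine (ae_restrict_iff' measurableSet_Ioi).2 (ae_of_all _ fun t (ht : 0 < t) => ?_)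
    rw [norm_mul, norm_mul, norm_of_nonneg (rpow_nonneg ht.le x), norm_of_nonneg ht.le]
    nlinarith [rpow_le_one_add ht.le (Ioo_subset_Icc_self hx), norm_nonneg (g t)]
  · refine (ae_restrict_iff' measurableSet_Ioi).2 (ae_of_all _ fun t (ht : 0 < t) => ?_)
    simpa using ((continuousAt_const_rpow (b := 0) ht.ne').tendsto.mono_left
      nhdsWithin_le_nhds).mul_const (g t)

/-- `lim_{x→0⁺} ∫₀^∞ x·t^{x-1}/(eᵗ+1) dt = 1/2`; equivalently,
`lim_{x→0⁺} ∫₀^∞ t^x·eᵗ/(eᵗ+1)² dt = ∫₀^∞ eᵗ/(eᵗ+1)² dt = 1/2`. -/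
theorem tendsto_integral_one_half :
    Tendsto (fun x : ℝ => ∫ t in Set.Ioi (0 : ℝ), x * t ^ (x - 1) / (Real.exp t + 1))
      (nhdsWithin 0 (Set.Ioi 0)) (nhds (1 / 2)) ∧
    Tendsto (fun x : ℝ => ∫ t in Set.Ioi (0 : ℝ), t ^ x * Real.exp t / (Real.exp t + 1) ^ 2)
      (nhdsWithin 0 (Set.Ioi 0)) (nhds (1 / 2)) ∧
    (∫ t in Set.Ioi (0 : ℝ), Real.exp t / (Real.exp t + 1) ^ 2) = 1 / 2 := by
  have hB : Tendsto (fun x : ℝ => ∫ t in Ioi (0 : ℝ), t ^ x * exp t / (exp t + 1) ^ 2)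
      (𝓝[>] 0) (𝓝 (1 / 2)) := by
    rw [← integral_exp_div_exp_add_one_sq_Ioi_zero]
    simp_rw [mul_div_assoc]
    refine tendsto_integral_rpow_mul_nhdsGT_zero ?_ ?_
    · simpa using integrableOn_rpow_mul_exp_div_exp_add_one_sq (s := 0) (by norm_num)
    · simpa [mul_div_assoc] using
        integrableOn_rpow_mul_exp_div_exp_add_one_sq (s := 1) (by norm_num)
  refine ⟨hB.congr' ?_, hB, integral_exp_div_exp_add_one_sq_Ioi_zero⟩
  filter_upwards [self_mem_nhdsWithin] with x hx
  exact (integral_mul_rpow_sub_one_div_exp_add_one hx).symm
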